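/- For every n ≥ 2, there is an n-state DFA M over {0,1} such that the minimal DFA for suff(L(M)) has exactly 2^n − 1 states. Specifically, take states {0,...,n-1}, start state 0, final state set {0}, with δ(q,0) = q for 0 ≤ q < n-1, δ(n-1,0) = 0, and δ(q,1) = (q+1) mod n. -/

import Mathlib

/-- The DFA of Theorem `suff`: states `{0,…,n-1}`, start state `0`, final state set
`{0}`, with `δ(q,0) = q` for `0 ≤ q < n-1`, `δ(n-1,0) = 0`, and
`δ(q,1) = (q+1) mod n`. -/
def suffWitnessDFA (n : ℕ) [NeZero n] : DFA (Fin 2) (Fin n) where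
  step q a := if a = 0 then (if q.val = n - 1 then 0 else q) else q + 1
  start := 0
  accept := {0}

/-!
Every state `q` is reached from `0` by `1^q`, so `suff(L(M))` is the set of words that drive
*some* state to `0`; it is recognized by the subset automaton on nonempty sets of states, started
at the full set, which has `2^n - 1` states. That automaton is minimal. The letter `1` rotates the
states and the letter `0` merges `n-1` into `0`, so conjugating `0` by rotations merges any `t`
into `t+1`; a nonempty set `A ≠ univ` has some `t ∉ A` with `t+1 ∈ A`, hence is the image of the
larger set `insert t A`, and every nonempty set is reachable. Finally `1^(-x)` maps exactly `x`
to `0`, so it separates any set containing `x` from one that does not.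
-/

namespace DFA

variable {α σ τ : Type*}

theorem suffixes_accepts_eq_of_surjective_eval (M : DFA α σ) (hM : Function.Surjective M.eval) :
    {v : List α | ∃ u, u ++ v ∈ M.accepts} = {v | ∃ q, M.evalFrom q v ∈ M.accept} := by
  ext v
  simp only [Set.mem_ofPred_eq, mem_accepts, eval, evalFrom_of_append]
  refine ⟨fun ⟨u, hu⟩ => ⟨_, hu⟩, fun ⟨q, hq⟩ => ?_⟩
  obtain ⟨u, rfl⟩ := hM q
  exact ⟨u, hq⟩

/-- Myhill–Nerode: both automata realize the left quotients of the common language. -/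
theorem card_le_of_accepts_eq [Fintype σ] [Fintype τ] (P : DFA α σ) (D : DFA α τ)
    (hreach : Function.Surjective P.eval) (hdist : Function.Injective P.acceptsFrom)
    (h : D.accepts = P.accepts) : Fintype.card σ ≤ Fintype.card τ := by
  have hquot : P.acceptsFrom ∘ P.eval = D.acceptsFrom ∘ D.eval := by
    rw [← Language.leftQuotient_accepts, ← Language.leftQuotient_accepts, h]
  refine Fintype.card_le_of_injective (D.eval ∘ Function.surjInv hreach) fun s t hst => ?_
  apply hdist
  have hs := congrArg (· (Function.surjInv hreach s)) hquot
  have ht := congrArg (· (Function.surjInv hreach t)) hquot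
  simp only [Function.comp_apply, Function.surjInv_eq hreach] at hs ht hst
  rw [hs, ht, hst]

variable [Fintype σ] [DecidableEq σ] [Nonempty σ]

/-- Subset construction for the words accepted from *some* state, restricted to the nonempty
subsets, which are the only reachable ones. -/
def suffixDFA (M : DFA α σ) : DFA α {S : Finset σ // S.Nonempty} where
  step S a := ⟨S.1.image (M.step · a), S.2.image _⟩
  start := ⟨Finset.univ, Finset.univ_nonempty⟩
  accept := {S | ∃ q ∈ S.1, q ∈ M.accept}

variable (M : DFA α σ)

theorem evalFrom_suffixDFA (S : {S : Finset σ // S.Nonempty}) (v : List α) :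
    (M.suffixDFA.evalFrom S v).1 = S.1.image (M.evalFrom · v) := by
  induction v generalizing S with
  | nil => simp
  | cons a v ih =>
    rw [evalFrom_cons, ih]
    simp only [suffixDFA, Finset.image_image]
    rfl

theorem acceptsFrom_suffixDFA (S : {S : Finset σ // S.Nonempty}) :
    M.suffixDFA.acceptsFrom S = {v | ∃ q ∈ S.1, M.evalFrom q v ∈ M.accept} := by
  ext v
  change (∃ q ∈ (M.suffixDFA.evalFrom S v).1, q ∈ M.accept) ↔ _
  simp only [evalFrom_suffixDFA, Finset.exists_mem_image]
  rfl

theorem accepts_suffixDFA : M.suffixDFA.accepts = {v | ∃ q, M.evalFrom q v ∈ M.accept} := by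
  change M.suffixDFA.acceptsFrom ⟨Finset.univ, _⟩ = _
  simp only [acceptsFrom_suffixDFA, Finset.mem_univ, true_and]
  rfl

end DFA

theorem Fintype.card_nonempty_finset (σ : Type*) [Fintype σ] [DecidableEq σ] :
    Fintype.card {S : Finset σ // S.Nonempty} = 2 ^ Fintype.card σ - 1 := by
  simp only [Finset.nonempty_iff_ne_empty]
  rw [Fintype.card_subtype_compl, Fintype.card_subtype_eq, Fintype.card_finset]

open Fin.NatCast Fin.CommRing

theorem Fin.exists_notMem_add_one_mem {n : ℕ} [NeZero n] {A : Finset (Fin n)} (hne : A.Nonempty)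
    (hA : A ≠ Finset.univ) : ∃ t ∉ A, t + 1 ∈ A := by
  by_contra! hclosed
  obtain ⟨b, hb⟩ := hne
  refine hA (Finset.eq_univ_iff_forall.mpr fun q => by_contra fun hq => ?_)
  have hout : ∀ k : ℕ, q + k ∉ A := by
    intro k
    induction k with
    | zero => simpa using hq
    | succ k ih => simpa [add_assoc] using hclosed _ ih
  exact absurd hb (by simpa using hout (b - q).val)

namespace suffWitnessDFA

variable {n : ℕ} [NeZero n]

theorem step_one (q : Fin n) : (suffWitnessDFA n).step q 1 = q + 1 := rfl

theorem step_zero (q : Fin n) : (suffWitnessDFA n).step q 0 = if q = -1 then 0 else q := by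
  obtain ⟨m, rfl⟩ := Nat.exists_eq_succ_of_ne_zero (NeZero.ne n)
  have h : ∀ q : Fin (m + 1), q.val = m ↔ q = -1 := fun q => by
    rw [← Fin.val_inj, Fin.coe_neg_one]
  simp [suffWitnessDFA, h]

theorem evalFrom_replicate_one (q : Fin n) (k : ℕ) :
    (suffWitnessDFA n).evalFrom q (List.replicate k 1) = q + k := by
  induction k generalizing q with
  | zero => simp
  | succ k ih =>
    rw [List.replicate_succ, DFA.evalFrom_cons, step_one, ih]
    push_cast
    ring

theorem eval_surjective : Function.Surjective (suffWitnessDFA n).eval := fun q =>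
  ⟨List.replicate q.val 1, by
    rw [DFA.eval, evalFrom_replicate_one, Fin.cast_val_eq_self]; exact zero_add q⟩

/-- Rotate `t` to the position `-1`, merge it into `0` with the letter `0`, rotate back. -/
def mergeWord (t : Fin n) : List (Fin 2) :=
  List.replicate (-(t + 1)).val 1 ++ [0] ++ List.replicate (t + 1).val 1

theorem evalFrom_mergeWord (t q : Fin n) :
    (suffWitnessDFA n).evalFrom q (mergeWord t) = if q = t then t + 1 else q := by
  simp only [mergeWord, DFA.evalFrom_of_append, evalFrom_replicate_one, Fin.cast_val_eq_self,
    DFA.evalFrom_singleton, step_zero]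
  by_cases hq : q = t
  · simp [hq]
  · have : q + -(t + 1) ≠ -1 := by
      intro h; apply hq; linear_combination h
    rw [if_neg this, if_neg hq]
    ring

theorem exists_word_image_eq (A : Finset (Fin n)) (hA : A.Nonempty) :
    ∃ w, Finset.univ.image ((suffWitnessDFA n).evalFrom · w) = A := by
  revert hA
  refine Finset.strongDownwardInductionOn (n := n)
    (p := fun A => A.Nonempty → ∃ w, Finset.univ.image ((suffWitnessDFA n).evalFrom · w) = A)
    A (fun A ih _ hA => ?_) (by simpa using A.card_le_univ)
  by_cases hu : A = Finset.univ
  · exact ⟨[], by simp [hu]⟩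
  obtain ⟨t, ht, ht1⟩ := Fin.exists_notMem_add_one_mem hA hu
  obtain ⟨w, hw⟩ := ih (by simpa using (insert t A).card_le_univ) (Finset.ssubset_insert ht)
    (Finset.insert_nonempty _ _)
  refine ⟨w ++ mergeWord t, ?_⟩
  have hfix : ∀ q ∈ A, (suffWitnessDFA n).evalFrom q (mergeWord t) = id q := fun q hq => by
    rw [evalFrom_mergeWord, if_neg (ne_of_mem_of_not_mem hq ht), id]
  calc Finset.univ.image ((suffWitnessDFA n).evalFrom · (w ++ mergeWord t))
      = (insert t A).image ((suffWitnessDFA n).evalFrom · (mergeWord t)) := by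
        rw [← hw, Finset.image_image]
        simp only [Function.comp_def, DFA.evalFrom_of_append]
    _ = A := by
        rw [Finset.image_insert, Finset.image_congr hfix, Finset.image_id, evalFrom_mergeWord,
          if_pos rfl, Finset.insert_eq_of_mem ht1]

theorem suffixDFA_eval_surjective : Function.Surjective (suffWitnessDFA n).suffixDFA.eval :=
  fun A => (exists_word_image_eq A.1 A.2).imp fun w hw =>
    Subtype.ext <| by rw [DFA.eval, DFA.evalFrom_suffixDFA]; exact hw

theorem replicate_mem_acceptsFrom_suffixDFA_iff (S : {S : Finset (Fin n) // S.Nonempty})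
    (x : Fin n) :
    List.replicate (-x).val 1 ∈ (suffWitnessDFA n).suffixDFA.acceptsFrom S ↔ x ∈ S.1 := by
  rw [DFA.acceptsFrom_suffixDFA]
  change (∃ q ∈ S.1, (suffWitnessDFA n).evalFrom q _ ∈ ({0} : Set (Fin n))) ↔ _
  simp [evalFrom_replicate_one, add_neg_eq_zero]

theorem suffixDFA_acceptsFrom_injective :
    Function.Injective (suffWitnessDFA n).suffixDFA.acceptsFrom := fun A B h =>
  Subtype.ext <| Finset.ext fun x => by
    rw [← replicate_mem_acceptsFrom_suffixDFA_iff, h, replicate_mem_acceptsFrom_suffixDFA_iff]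

end suffWitnessDFA

theorem suff_state_complexity_tight_general (n : ℕ) [NeZero n] :
    (∃ (τ : Type) (_ : Fintype τ) (D' : DFA (Fin 2) τ),
        D'.accepts = {v : List (Fin 2) | ∃ u, u ++ v ∈ (suffWitnessDFA n).accepts} ∧
        Fintype.card τ = 2 ^ n - 1) ∧
    (∀ (τ : Type) (_ : Fintype τ) (D' : DFA (Fin 2) τ),
        D'.accepts = {v : List (Fin 2) | ∃ u, u ++ v ∈ (suffWitnessDFA n).accepts} →
        2 ^ n - 1 ≤ Fintype.card τ) := by
  have hsuff : {v : List (Fin 2) | ∃ u, u ++ v ∈ (suffWitnessDFA n).accepts} =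
      (suffWitnessDFA n).suffixDFA.accepts := by
    rw [DFA.accepts_suffixDFA, DFA.suffixes_accepts_eq_of_surjective_eval _
      suffWitnessDFA.eval_surjective]
  have hcard := Fintype.card_nonempty_finset (Fin n)
  rw [Fintype.card_fin] at hcard
  rw [hsuff, ← hcard]
  exact ⟨⟨_, inferInstance, _, rfl, rfl⟩, fun τ _ D hD =>
    DFA.card_le_of_accepts_eq _ D suffWitnessDFA.suffixDFA_eval_surjective
      suffWitnessDFA.suffixDFA_acceptsFrom_injective hD⟩

theorem suff_state_complexity_tight (n : ℕ) [NeZero n] (hn : 2 ≤ n) :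
    (∃ (τ : Type) (_ : Fintype τ) (D' : DFA (Fin 2) τ),
        D'.accepts = {v : List (Fin 2) | ∃ u, u ++ v ∈ (suffWitnessDFA n).accepts} ∧
        Fintype.card τ = 2 ^ n - 1) ∧
    (∀ (τ : Type) (_ : Fintype τ) (D' : DFA (Fin 2) τ),
        D'.accepts = {v : List (Fin 2) | ∃ u, u ++ v ∈ (suffWitnessDFA n).accepts} →
        2 ^ n - 1 ≤ Fintype.card τ) :=
  suff_state_complexity_tight_general n
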